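/- arXiv:2502.19408 — 4 statements merged into one kernel-verified Lean document; each statement's English description precedes it below -/
import Mathlib

section
/- Let f(x) = ∑_{k≥−1} f_k x^k be a formal Laurent series with complex coefficients having at most a simple pole at x = 0 and with f_{−1} ≠ 0. Then the series g(z) := ∑_{k≥1} (1/k)·([x^{−1}] f^k)·z^{−k} lies in z^{−1}·ℂ⟦z^{−1}⟧ with leading coefficient f_{−1} ≠ 0, and it is the unique element of ℂ⟦z^{−1}⟧ satisfying f(g(z)) = z. Moreover, a series f of the given form is uniquely determined by its compositional inverse g. -/
/-- The coefficient of `x^n` in the substitution `f(g)` of a Laurent series `g` into a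
Laurent series `f = ∑_{k≥−1} f_k x^k` with at most a simple pole:
`[x^n] f(g) = f_{−1}·[x^n](g^{−1}) + ∑_{k=0}^{n} f_k·[x^n](g^k)`.  When `g` has vanishing
coefficients in degrees `≤ 0` the truncation of the sum at `k = n` is valid, since then
`g^k` has order `≥ k`, so this is the honest coefficient of the (coefficientwise
convergent) substitution `f(g) = f_{−1}·g^{−1} + ∑_{k≥0} f_k·g^k`. -/
noncomputable def laurentSubstCoeff (F g : LaurentSeries ℂ) (n : ℤ) : ℂ :=
  F.coeff (-1) * (g⁻¹).coeff n +
    ∑ k ∈ Finset.Icc (0 : ℤ) n, F.coeff k * (g ^ k.toNat).coeff n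

/-!
Write `u = z⁻¹` and `f(x) = φ(x) / x`, where `φ = x f(x)` is a power series with
`φ(0) = f₋₁ ≠ 0`. Then `f(g) = u⁻¹` is the fixed-point equation `g = u φ(g)`, with `φ(g)`
the substitution `PowerSeries.heval`. On series of positive order, `h ↦ u φ(h)` raises the
order of differences by one, so iterating it from `0` converges coefficientwise to the unique
fixed point.

The coefficients come from constant terms against the Euler derivation `E = u d/du`:
`[u⁰] (g^k E g)` vanishes for `k ≠ -1` (it is `[u⁰]` of `E (g^(k+1)) / (k+1)`) and equals
`ord g = 1` for `k = -1`. Expanding `φ(g)^n = ∑ (φ^n)_k g^k` gives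
`[u⁰] (g^(-n) φ(g)^n E g) = [x^(n-1)] φ^n = [x⁻¹] f^n`, while `g^(-n) φ(g)^n = u^(-n)` makes
the same constant term `n g_n`. Finally `φ ↦ φ(g)` is injective, so `f` is determined by `g`.
-/

open HahnSeries
open PowerSeries (heval)
open scoped LaurentSeries

namespace HahnSeries

variable {Γ R : Type*} [AddCommMonoid Γ] [LinearOrder Γ] [IsOrderedCancelAddMonoid Γ]
  [CommRing R]

theorem zero_le_orderTop_pow {x : R⟦Γ⟧} (hx : 0 ≤ x.orderTop) (k : ℕ) :
    0 ≤ (x ^ k).orderTop :=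
  (nsmul_nonneg hx k).trans (orderTop_nsmul_le_orderTop_pow)

theorem le_orderTop_pow_sub_pow {x y : R⟦Γ⟧} (hx : 0 ≤ x.orderTop) (hy : 0 ≤ y.orderTop)
    {m : WithTop Γ} (h : m ≤ (x - y).orderTop) (k : ℕ) : m ≤ (x ^ k - y ^ k).orderTop := by
  induction k with
  | zero => simp
  | succ k ih =>
    have hsplit : x ^ (k + 1) - y ^ (k + 1) = x ^ k * (x - y) + (x ^ k - y ^ k) * y := by ring
    rw [hsplit]
    refine le_trans (le_min ?_ ?_) min_orderTop_le_orderTop_add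
    · exact (h.trans (le_add_of_nonneg_left (zero_le_orderTop_pow hx k))).trans
        orderTop_add_le_mul
    · exact (ih.trans (le_add_of_nonneg_right hy)).trans orderTop_add_le_mul

end HahnSeries

namespace PowerSeries

variable {Γ R : Type*} [AddCommMonoid Γ] [LinearOrder Γ] [IsOrderedCancelAddMonoid Γ]
  [CommRing R]

theorem coeff_heval_of_orderTop_pos {x : R⟦Γ⟧} (hx : 0 < x.orderTop) (p : PowerSeries R)
    (n : Γ) :
    (heval x p).coeff n = ∑ᶠ k : ℕ, p.coeff k * (x ^ k).coeff n := by
  simp [hx]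

theorem zero_le_orderTop_heval {x : R⟦Γ⟧} (hx : 0 < x.orderTop) (p : PowerSeries R) :
    0 ≤ (heval x p).orderTop := by
  refine le_orderTop_iff_forall.2 fun j hj => ?_
  rw [coeff_heval_of_orderTop_pos hx]
  refine finsum_eq_zero_of_forall_eq_zero fun k => ?_
  rw [coeff_eq_zero_of_lt_orderTop (hj.trans_le (zero_le_orderTop_pow hx.le k)), mul_zero]

theorem heval_injective [IsDomain R] {x : R⟦Γ⟧} (hx : 0 < x.orderTop) (hx0 : x ≠ 0) :
    Function.Injective (heval x) := by
  refine (injective_iff_map_eq_zero (heval x)).2 fun p hp => ?_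
  by_contra hp0
  have hq : (heval x (divXPowOrder p)).coeff 0 ≠ 0 := by
    rw [coeff_heval_zero]
    exact constantCoeff_divXPowOrder_eq_zero_iff.not.2 hp0
  rw [← X_pow_order_mul_divXPowOrder (f := p), map_mul, map_pow, heval_X x hx] at hp
  exact mul_ne_zero (pow_ne_zero _ hx0) (ne_zero_of_coeff_ne_zero hq) hp

theorem le_orderTop_heval_sub_heval {x y : R⟦Γ⟧} (hx : 0 < x.orderTop) (hy : 0 < y.orderTop)
    {m : WithTop Γ} (h : m ≤ (x - y).orderTop) (p : PowerSeries R) :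
    m ≤ (heval x p - heval y p).orderTop := by
  refine le_orderTop_iff_forall.2 fun j hj => ?_
  rw [HahnSeries.coeff_sub, coeff_heval_of_orderTop_pos hx, coeff_heval_of_orderTop_pos hy,
    sub_eq_zero]
  refine finsum_congr fun k => ?_
  have hk := coeff_eq_zero_of_lt_orderTop (hj.trans_le (le_orderTop_pow_sub_pow hx.le hy.le h k))
  rw [HahnSeries.coeff_sub, sub_eq_zero] at hk
  rw [hk]

end PowerSeries

namespace LaurentSeries

section Order

variable {R : Type*} [CommRing R]

theorem one_le_orderTop_iff_pos {x : R⸨X⸩} : 1 ≤ x.orderTop ↔ 0 < x.orderTop := by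
  generalize x.orderTop = a
  induction a using WithTop.recTopCoe with
  | top => simp
  | coe a => norm_cast

theorem eq_of_forall_natCast_le_orderTop_sub {x y : R⸨X⸩}
    (h : ∀ m : ℕ, (m : WithTop ℤ) ≤ (x - y).orderTop) : x = y := by
  refine sub_eq_zero.1 (orderTop_eq_top.1 (WithTop.eq_top_iff_forall_ge.2 fun m => ?_))
  exact le_trans (by exact_mod_cast m.self_le_toNat) (h m.toNat)

theorem order_eq_of_forall_lt_coeff_eq_zero {x : R⸨X⸩} {d : ℤ}
    (hlt : ∀ k < d, x.coeff k = 0) (hd : x.coeff d ≠ 0) : x.order = d :=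
  le_antisymm (order_le_of_coeff_ne_zero hd)
    ((le_order_iff_forall (ne_zero_of_coeff_ne_zero hd)).2 hlt)

theorem zero_lt_orderTop_iff_forall_coeff_eq_zero {x : R⸨X⸩} :
    0 < x.orderTop ↔ ∀ n ≤ 0, x.coeff n = 0 := by
  rw [← one_le_orderTop_iff_pos, ← WithTop.coe_one, le_orderTop_iff_forall]
  refine forall_congr' fun n => imp_congr_left ?_
  rw [WithTop.coe_lt_coe]
  omega

theorem natCast_le_orderTop_pow {x : R⸨X⸩} (hx : 0 < x.orderTop) (k : ℕ) :
    (k : WithTop ℤ) ≤ (x ^ k).orderTop :=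
  calc (k : WithTop ℤ) = k • 1 := by simp
    _ ≤ k • x.orderTop := nsmul_le_nsmul_right (one_le_orderTop_iff_pos.2 hx) k
    _ ≤ (x ^ k).orderTop := orderTop_nsmul_le_orderTop_pow

theorem coeff_heval_eq_sum_Icc {x : R⸨X⸩} (hx : 0 < x.orderTop) (p : PowerSeries R) (n : ℤ) :
    (heval x p).coeff n =
      ∑ k ∈ Finset.Icc (0 : ℤ) n, PowerSeries.coeff k.toNat p * (x ^ k.toNat).coeff n := by
  rw [PowerSeries.coeff_heval_of_orderTop_pos hx,
    finsum_eq_sum_of_support_subset (s := (Finset.Icc (0 : ℤ) n).image Int.toNat),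
    Finset.sum_image]
  · intro a ha b hb hab
    simp only [Finset.coe_Icc, Set.mem_Icc] at ha hb
    omega
  · intro k hk
    have hkn : (k : ℤ) ≤ n := by
      by_contra! hlt
      exact right_ne_zero_of_mul hk (coeff_eq_zero_of_lt_orderTop
        (lt_of_lt_of_le (by exact_mod_cast hlt) (natCast_le_orderTop_pow hx k)))
    simp only [Finset.coe_image, Finset.coe_Icc, Set.mem_image, Set.mem_Icc]
    exact ⟨k, ⟨k.cast_nonneg, hkn⟩, Int.toNat_natCast k⟩

theorem coeff_powerSeriesPart_pow (x : R⸨X⸩) (j n : ℕ) :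
    PowerSeries.coeff n (x.powerSeriesPart ^ j) = (x ^ j).coeff (n + j * x.order) := by
  have h : (ofPowerSeries ℤ R (x.powerSeriesPart ^ j)) = single (-(j * x.order)) 1 * x ^ j := by
    rw [map_pow, ofPowerSeries_powerSeriesPart, mul_pow, single_pow, one_pow, nsmul_eq_mul, mul_neg]
  have hshift := coeff_single_mul_add (r := (1 : R)) (x := x ^ j) (a := n + j * x.order)
    (b := -(j * x.order))
  rw [add_neg_cancel_right, one_mul] at hshift
  rw [← coeff_coe_powerSeries, h, hshift]

theorem constantCoeff_powerSeriesPart (x : R⸨X⸩) :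
    PowerSeries.constantCoeff x.powerSeriesPart = x.coeff x.order := by
  rw [← PowerSeries.coeff_zero_eq_constantCoeff_apply, powerSeriesPart_coeff, Nat.cast_zero,
    add_zero]

theorem eq_of_order_eq_of_powerSeriesPart_eq {x y : R⸨X⸩} (h : x.order = y.order)
    (hp : x.powerSeriesPart = y.powerSeriesPart) : x = y := by
  rw [← single_order_mul_powerSeriesPart x, ← single_order_mul_powerSeriesPart y, h, hp]

end Order

section EulerDeriv

variable {R : Type*} [CommRing R]

def eulerDerivFun (f : R⸨X⸩) : R⸨X⸩ :=
  ⟨fun n => (n : R) * f.coeff n, f.isPWO_support.mono fun n hn h => hn (by simp [h])⟩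

theorem coeff_eulerDerivFun (f : R⸨X⸩) (n : ℤ) : (eulerDerivFun f).coeff n = n * f.coeff n :=
  rfl

theorem support_eulerDerivFun_subset (f : R⸨X⸩) : (eulerDerivFun f).support ⊆ f.support :=
  fun n hn h => hn (by simp [coeff_eulerDerivFun, h])

def eulerDeriv : Derivation R R⸨X⸩ R⸨X⸩ where
  toFun := eulerDerivFun
  map_add' f g := by ext n; simp [coeff_eulerDerivFun, mul_add]
  map_smul' r f := by
    ext n
    -- the `R`-algebra structure of `R⸨X⸩` is the one through `R⟦X⟧`
    rw [Algebra.smul_def, HahnSeries.algebraMap_apply', PowerSeries.algebraMap_apply,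
      Algebra.algebraMap_self, RingHom.id_apply, ofPowerSeries_C, C_mul_eq_smul]
    simp [coeff_eulerDerivFun, mul_left_comm]
  map_one_eq_zero' := by ext n; by_cases h : n = 0 <;> simp [coeff_eulerDerivFun, h]
  leibniz' f g := by
    ext n
    simp only [LinearMap.coe_mk, AddHom.coe_mk, smul_eq_mul, HahnSeries.coeff_add]
    rw [mul_comm g, coeff_mul_right' g.isPWO_support (support_eulerDerivFun_subset g),
      coeff_mul_left' f.isPWO_support (support_eulerDerivFun_subset f), coeff_eulerDerivFun,
      coeff_mul, Finset.mul_sum, ← Finset.sum_add_distrib]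
    refine Finset.sum_congr rfl fun ij hij => ?_
    rw [(Finset.mem_antidiagonal.mp hij).2.2.symm, coeff_eulerDerivFun, coeff_eulerDerivFun]
    push_cast
    ring

@[simp]
theorem coeff_eulerDeriv (f : R⸨X⸩) (n : ℤ) : (eulerDeriv f).coeff n = n * f.coeff n := rfl

theorem eulerDeriv_single (d : ℤ) (c : R) : eulerDeriv (single d c) = single d ((d : R) * c) := by
  ext n
  by_cases h : n = d <;> simp [h]

theorem zero_lt_orderTop_eulerDeriv {f : R⸨X⸩} (hf : 0 ≤ f.orderTop) :
    0 < (eulerDeriv f).orderTop := by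
  refine lt_of_lt_of_le (WithTop.coe_lt_coe.2 zero_lt_one)
    (le_orderTop_iff_forall.2 fun j hj => ?_)
  rcases (show j ≤ 0 from Int.lt_add_one_iff.mp (by exact_mod_cast hj)).lt_or_eq with hj | rfl
  · simp [coeff_eq_zero_of_lt_orderTop (lt_of_lt_of_le (WithTop.coe_lt_coe.2 hj) hf)]
  · simp

end EulerDeriv

section Residue

variable {K : Type*} [Field K]

theorem coeff_zero_inv_mul_eulerDeriv (f : K⸨X⸩) :
    (f⁻¹ * eulerDeriv f).coeff 0 = f.order := by
  rcases eq_or_ne f 0 with rfl | hf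
  · simp
  -- `f = u^d w` with `ord w = 0`, so `f⁻¹ E f = w⁻¹ E w + d` and `w⁻¹ E w` has positive order.
  set d := f.order
  set w := single (-d) (1 : K) * f with hw
  have hf_eq : f = single d 1 * w := by
    rw [hw, ← mul_assoc, single_mul_single, add_neg_cancel, mul_one, single_zero_one, one_mul]
  have hw_orderTop : w.orderTop = 0 := by
    rw [hw, orderTop_mul, orderTop_single one_ne_zero, ← order_eq_orderTop_of_ne_zero hf]
    simp [d]
  have hlog : f⁻¹ * eulerDeriv f = w⁻¹ * eulerDeriv w + C (d : K) := by
    have hs : single d ((d : K) * 1) = C (d : K) * single d 1 := by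
      rw [C_apply, single_mul_single, zero_add]
    have hs0 : (single d (1 : K)) ≠ 0 := by simp
    have hw0 : w ≠ 0 := by simp [hw, hf]
    rw [hf_eq, Derivation.leibniz, eulerDeriv_single, smul_eq_mul, smul_eq_mul, hs]
    field_simp
  have hres : (w⁻¹ * eulerDeriv w).coeff 0 = 0 := by
    refine coeff_eq_zero_of_lt_orderTop ?_
    rw [orderTop_mul, ← addVal_apply, AddValuation.map_inv, addVal_apply, hw_orderTop, neg_zero,
      zero_add]
    exact zero_lt_orderTop_eulerDeriv hw_orderTop.ge
  rw [hlog, HahnSeries.coeff_add, hres, C_apply, coeff_single_same, zero_add]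

theorem coeff_zero_zpow_mul_eulerDeriv [CharZero K] (f : K⸨X⸩) (k : ℤ) :
    (f ^ k * eulerDeriv f).coeff 0 = if k = -1 then (f.order : K) else 0 := by
  split_ifs with hk
  · rw [hk, zpow_neg_one, coeff_zero_inv_mul_eulerDeriv]
  · have h := congrArg (fun x : K⸨X⸩ => x.coeff 0) (eulerDeriv.leibniz_zpow f (k + 1))
    simp only [coeff_eulerDeriv, Int.cast_zero, zero_mul, add_sub_cancel_right, smul_eq_mul] at h
    rw [HahnSeries.coeff_smul, zsmul_eq_mul] at h
    have hk1 : ((k + 1 : ℤ) : K) ≠ 0 := by exact_mod_cast (show k + 1 ≠ 0 by omega)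
    exact (mul_eq_zero.mp h.symm).resolve_left hk1

theorem coeff_zero_zpow_mul_heval_mul_eulerDeriv [CharZero K] {g : K⸨X⸩} (hg : 0 < g.orderTop)
    (p : PowerSeries K) (n : ℕ) :
    (g ^ (-(n + 1 : ℤ)) * heval g p * eulerDeriv g).coeff 0 =
      g.order * PowerSeries.coeff n p := by
  rcases eq_or_ne g 0 with rfl | hg0
  · simp
  have hterm : ∀ k : ℕ,
      (((g ^ (-(n + 1 : ℤ)) * eulerDeriv g) • SummableFamily.powerSeriesFamily g p) k).coeff 0 =
        PowerSeries.coeff k p * (g ^ ((k : ℤ) - (n + 1)) * eulerDeriv g).coeff 0 := by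
    intro k
    rw [SummableFamily.smul_apply, of_symm_smul_of_eq_mul,
      SummableFamily.powerSeriesFamily_of_orderTop_pos hg, ← C_mul_eq_smul]
    have hk : g ^ (-(n + 1 : ℤ)) * eulerDeriv g * (C (PowerSeries.coeff k p) * g ^ k) =
        C (PowerSeries.coeff k p) * (g ^ ((k : ℤ) - (n + 1)) * eulerDeriv g) := by
      rw [sub_eq_neg_add, zpow_add₀ hg0, zpow_natCast]
      ring
    rw [hk, C_mul_eq_smul, HahnSeries.coeff_smul, smul_eq_mul]
  rw [PowerSeries.heval_apply, mul_right_comm, ← SummableFamily.hsum_smul,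
    SummableFamily.coeff_hsum, finsum_congr hterm, finsum_eq_single _ n]
  · rw [coeff_zero_zpow_mul_eulerDeriv, if_pos (by ring), mul_comm]
  · intro k hk
    rw [coeff_zero_zpow_mul_eulerDeriv, if_neg (by omega), mul_zero]

end Residue

section LagrangeMap

variable {R : Type*} [CommRing R]

noncomputable def lagrangeMap (φ : PowerSeries R) (h : R⸨X⸩) : R⸨X⸩ :=
  single 1 1 * heval h φ

theorem coeff_lagrangeMap_add_one (φ : PowerSeries R) (h : R⸨X⸩) (n : ℤ) :
    (lagrangeMap φ h).coeff (n + 1) = (heval h φ).coeff n := by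
  rw [lagrangeMap, coeff_single_mul_add, one_mul]

theorem coeff_one_of_lagrangeMap_eq_self {φ : PowerSeries R} {g : R⸨X⸩}
    (hfix : lagrangeMap φ g = g) : g.coeff 1 = PowerSeries.constantCoeff φ := by
  rw [← hfix, ← zero_add (1 : ℤ), coeff_lagrangeMap_add_one, PowerSeries.coeff_heval_zero]

theorem one_le_orderTop_lagrangeMap (φ : PowerSeries R) {h : R⸨X⸩} (hh : 0 < h.orderTop) :
    1 ≤ (lagrangeMap φ h).orderTop := by
  refine le_trans ?_ orderTop_add_le_mul
  simpa using add_le_add (orderTop_single_le (a := (1 : ℤ)) (r := (1 : R)))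
    (PowerSeries.zero_le_orderTop_heval hh φ)

theorem le_orderTop_lagrangeMap_sub (φ : PowerSeries R) {h h' : R⸨X⸩} (hh : 0 < h.orderTop)
    (hh' : 0 < h'.orderTop) {m : WithTop ℤ} (hm : m ≤ (h - h').orderTop) :
    m + 1 ≤ (lagrangeMap φ h - lagrangeMap φ h').orderTop := by
  rw [lagrangeMap, lagrangeMap, ← mul_sub, add_comm]
  exact (add_le_add (by simpa using orderTop_single_le (a := (1 : ℤ)) (r := (1 : R)))
    (PowerSeries.le_orderTop_heval_sub_heval hh hh' hm φ)).trans orderTop_add_le_mul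

theorem eq_of_lagrangeMap_eq_self {φ : PowerSeries R} {g g' : R⸨X⸩} (hg : 0 < g.orderTop)
    (hg' : 0 < g'.orderTop) (hfix : lagrangeMap φ g = g) (hfix' : lagrangeMap φ g' = g') :
    g = g' := by
  refine eq_of_forall_natCast_le_orderTop_sub fun m => ?_
  induction m with
  | zero => simpa using le_trans (le_min hg.le hg'.le) min_orderTop_le_orderTop_sub
  | succ m ih =>
    rw [← hfix, ← hfix']
    exact_mod_cast le_orderTop_lagrangeMap_sub φ hg hg' ih

theorem lagrangeMap_left_injective [IsDomain R] {g : R⸨X⸩} (hg : 0 < g.orderTop)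
    (hg0 : g ≠ 0) :
    Function.Injective (lagrangeMap · g) := fun _ _ h =>
  PowerSeries.heval_injective hg hg0 (mul_left_cancel₀ (single_ne_zero one_ne_zero) h)

noncomputable def lagrangeApprox (φ : PowerSeries R) (m : ℕ) : R⸨X⸩ := (lagrangeMap φ)^[m] 0

theorem lagrangeApprox_succ (φ : PowerSeries R) (m : ℕ) :
    lagrangeApprox φ (m + 1) = lagrangeMap φ (lagrangeApprox φ m) :=
  Function.iterate_succ_apply' _ _ _

theorem zero_lt_orderTop_lagrangeApprox (φ : PowerSeries R) (m : ℕ) :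
    0 < (lagrangeApprox φ m).orderTop := by
  induction m with
  | zero => simp [lagrangeApprox]
  | succ m ih =>
    rw [lagrangeApprox_succ]
    exact one_le_orderTop_iff_pos.1 (one_le_orderTop_lagrangeMap φ ih)

theorem le_orderTop_lagrangeApprox_succ_sub (φ : PowerSeries R) (m : ℕ) :
    (m + 1 : WithTop ℤ) ≤ (lagrangeApprox φ (m + 1) - lagrangeApprox φ m).orderTop := by
  induction m with
  | zero => simpa [lagrangeApprox] using one_le_orderTop_lagrangeMap φ (h := 0) (by simp)
  | succ m ih =>
    have h := le_orderTop_lagrangeMap_sub φ (zero_lt_orderTop_lagrangeApprox φ (m + 1))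
      (zero_lt_orderTop_lagrangeApprox φ m) ih
    rw [← lagrangeApprox_succ, ← lagrangeApprox_succ] at h
    exact_mod_cast h

theorem le_orderTop_lagrangeApprox_sub (φ : PowerSeries R) {m m' : ℕ} (hm : m ≤ m') :
    (m + 1 : WithTop ℤ) ≤ (lagrangeApprox φ m' - lagrangeApprox φ m).orderTop := by
  induction m', hm using Nat.le_induction with
  | base => simp
  | succ m' hm ih =>
    rw [← sub_add_sub_cancel _ (lagrangeApprox φ m')]
    refine le_trans (le_min ?_ ih) min_orderTop_le_orderTop_add
    exact le_trans (by exact_mod_cast Nat.add_le_add_right hm 1)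
      (le_orderTop_lagrangeApprox_succ_sub φ m')

-- Coefficient `n` is read off the `n`-th iterate, which is already exact in degrees `≤ n`.
noncomputable def lagrangeSolution (φ : PowerSeries R) : R⸨X⸩ :=
  ofSuppBddBelow (fun n => (lagrangeApprox φ n.toNat).coeff n) ⟨0, fun n hn => by
    by_contra! hn0
    exact hn (by simp [lagrangeApprox, Int.toNat_of_nonpos hn0.le])⟩

theorem coeff_lagrangeSolution (φ : PowerSeries R) (n : ℤ) :
    (lagrangeSolution φ).coeff n = (lagrangeApprox φ n.toNat).coeff n :=
  rfl

theorem le_orderTop_lagrangeSolution_sub (φ : PowerSeries R) (m : ℕ) :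
    (m + 1 : WithTop ℤ) ≤ (lagrangeSolution φ - lagrangeApprox φ m).orderTop := by
  refine le_orderTop_iff_forall.2 fun j hj => ?_
  have hj : j < m + 1 := by exact_mod_cast hj
  have h := le_orderTop_lagrangeApprox_sub φ (show j.toNat ≤ m by omega)
  rw [HahnSeries.coeff_sub, coeff_lagrangeSolution, sub_eq_zero, eq_comm, ← sub_eq_zero,
    ← HahnSeries.coeff_sub]
  have hj' : j < j.toNat + 1 := by omega
  exact coeff_eq_zero_of_lt_orderTop (lt_of_lt_of_le (by exact_mod_cast hj') h)

theorem zero_lt_orderTop_lagrangeSolution (φ : PowerSeries R) :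
    0 < (lagrangeSolution φ).orderTop :=
  one_le_orderTop_iff_pos.1 (by simpa [lagrangeApprox] using le_orderTop_lagrangeSolution_sub φ 0)

theorem lagrangeMap_lagrangeSolution (φ : PowerSeries R) :
    lagrangeMap φ (lagrangeSolution φ) = lagrangeSolution φ := by
  refine eq_of_forall_natCast_le_orderTop_sub fun m => ?_
  have h₁ := le_orderTop_lagrangeMap_sub φ (zero_lt_orderTop_lagrangeSolution φ)
    (zero_lt_orderTop_lagrangeApprox φ m) (le_orderTop_lagrangeSolution_sub φ m)
  have h₂ := le_orderTop_lagrangeSolution_sub φ (m + 1)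
  rw [← orderTop_neg, neg_sub, lagrangeApprox_succ] at h₂
  rw [← sub_add_sub_cancel _ (lagrangeMap φ (lagrangeApprox φ m))]
  refine le_trans (le_min (le_trans ?_ h₁) (le_trans ?_ h₂)) min_orderTop_le_orderTop_add
  · exact_mod_cast (by omega : m ≤ m + 1 + 1)
  · exact_mod_cast (by omega : m ≤ m + 1 + 1)

theorem existsUnique_lagrangeMap_eq_self (φ : PowerSeries R) :
    ∃! g : R⸨X⸩, 0 < g.orderTop ∧ lagrangeMap φ g = g :=
  ⟨lagrangeSolution φ, ⟨zero_lt_orderTop_lagrangeSolution φ, lagrangeMap_lagrangeSolution φ⟩,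
    fun _ ⟨hg, hfix⟩ => eq_of_lagrangeMap_eq_self hg (zero_lt_orderTop_lagrangeSolution φ) hfix
      (lagrangeMap_lagrangeSolution φ)⟩

end LagrangeMap

theorem lagrange_inversion {K : Type*} [Field K] [CharZero K] {φ : PowerSeries K}
    (hφ : PowerSeries.constantCoeff φ ≠ 0) {g : K⸨X⸩} (hg : 0 < g.orderTop)
    (hfix : lagrangeMap φ g = g) (n : ℕ) :
    ((n : K) + 1) * g.coeff (n + 1) = PowerSeries.coeff n (φ ^ (n + 1)) := by
  have hg1 := coeff_one_of_lagrangeMap_eq_self hfix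
  have hg0 : g ≠ 0 := ne_zero_of_coeff_ne_zero (hg1 ▸ hφ)
  have hord : g.order = 1 := by
    have := (zero_lt_orderTop_iff hg0).1 hg
    have := order_le_of_coeff_ne_zero (hg1 ▸ hφ)
    omega
  have hinv : g⁻¹ * heval g φ = single (-1) 1 := by
    calc g⁻¹ * heval g φ = g⁻¹ * (single (-1) 1 * lagrangeMap φ g) := by
          rw [lagrangeMap, ← mul_assoc (single (-1) 1), single_mul_single, neg_add_cancel,
            mul_one, single_zero_one, one_mul]
      _ = single (-1) 1 := by rw [hfix, mul_left_comm, inv_mul_cancel₀ hg0, mul_one]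
  have hpow : g ^ (-(n + 1 : ℤ)) * heval g (φ ^ (n + 1)) = single (-(n + 1 : ℤ)) 1 := by
    rw [show g ^ (-(n + 1 : ℤ)) = g⁻¹ ^ (n + 1) by rw [zpow_neg, inv_pow]; exact_mod_cast rfl,
      map_pow, ← mul_pow, hinv, single_pow]
    simp
  have hres := coeff_zero_zpow_mul_heval_mul_eulerDeriv hg (φ ^ (n + 1)) n
  have hshift := coeff_single_mul_add (r := (1 : K)) (x := eulerDeriv g) (a := (n + 1 : ℤ))
    (b := -(n + 1 : ℤ))
  rw [add_neg_cancel] at hshift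
  rw [hpow, hord, hshift] at hres
  simpa using hres

theorem lagrange_inversion_of_order_eq_neg_one {K : Type*} [Field K] [CharZero K] {F g : K⸨X⸩}
    (hF : F.order = -1) (hg : 0 < g.orderTop) (hfix : lagrangeMap F.powerSeriesPart g = g)
    (n : ℤ) (hn : 1 ≤ n) : g.coeff n = (n : K)⁻¹ * (F ^ n.toNat).coeff (-1) := by
  have hF0 : F ≠ 0 := by
    rintro rfl
    simp at hF
  have hφ : PowerSeries.constantCoeff F.powerSeriesPart ≠ 0 := by
    rw [constantCoeff_powerSeriesPart]
    exact coeff_order_eq_zero.not.2 hF0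
  obtain ⟨m, rfl⟩ : ∃ m : ℕ, n = m + 1 := ⟨n.toNat - 1, by omega⟩
  have h := lagrange_inversion hφ hg hfix m
  rw [coeff_powerSeriesPart_pow, hF, show (m : ℤ) + (m + 1 : ℕ) * -1 = -1 by push_cast; ring]
    at h
  rw [show ((m : ℤ) + 1).toNat = m + 1 by omega, ← h]
  push_cast
  field_simp

theorem laurentSubstCoeff_eq_coeff_inv_mul_heval {F g : ℂ⸨X⸩} (hF : F.order = -1)
    (hg : 0 < g.orderTop) (hg0 : g ≠ 0) (n : ℤ) :
    laurentSubstCoeff F g n = (g⁻¹ * heval g F.powerSeriesPart).coeff n := by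
  have hsplit : F.powerSeriesPart =
      PowerSeries.X * PowerSeries.mk (fun k => F.coeff k) + PowerSeries.C (F.coeff (-1)) := by
    ext (_ | k)
    · simp [hF]
    · simp [hF, PowerSeries.coeff_succ_X_mul]
  have hinv : g⁻¹ * heval g F.powerSeriesPart =
      heval g (PowerSeries.mk fun k => F.coeff k) + C (F.coeff (-1)) * g⁻¹ := by
    rw [hsplit, map_add, map_mul, PowerSeries.heval_X _ hg, PowerSeries.heval_C, ← C_mul_eq_smul,
      mul_one, mul_add, ← mul_assoc, inv_mul_cancel₀ hg0, one_mul, mul_comm g⁻¹]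
  rw [hinv, HahnSeries.coeff_add, coeff_heval_eq_sum_Icc hg, C_mul_eq_smul, HahnSeries.coeff_smul,
    smul_eq_mul, laurentSubstCoeff, add_comm]
  congr 1
  refine Finset.sum_congr rfl fun k hk => ?_
  rw [PowerSeries.coeff_mk, Int.toNat_of_nonneg (Finset.mem_Icc.1 hk).1]

theorem laurentSubstCoeff_eq_ite_iff {F g : ℂ⸨X⸩} (hF : F.order = -1) (hg : 0 < g.orderTop)
    (hg0 : g ≠ 0) :
    (∀ n, laurentSubstCoeff F g n = if n = -1 then 1 else 0) ↔
      lagrangeMap F.powerSeriesPart g = g := by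
  have hs : single (1 : ℤ) (1 : ℂ) * single (-1) 1 = 1 := by
    rw [single_mul_single, add_neg_cancel, mul_one, single_zero_one]
  simp_rw [laurentSubstCoeff_eq_coeff_inv_mul_heval hF hg hg0]
  trans g⁻¹ * heval g F.powerSeriesPart = single (-1) 1
  · exact ⟨fun h => HahnSeries.ext (funext fun n => by rw [h n, coeff_single]; congr),
      fun h n => by rw [h, coeff_single]; congr⟩
  rw [lagrangeMap, inv_mul_eq_iff_eq_mul₀ hg0]
  constructor
  · intro h
    linear_combination single (1 : ℤ) (1 : ℂ) * h + g * hs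
  · intro h
    linear_combination single (-1 : ℤ) (1 : ℂ) * h - heval g F.powerSeriesPart * hs

end LaurentSeries

open LaurentSeries

/-- Series in `z⁻¹` are encoded as `LaurentSeries ℂ` in the variable `u = z⁻¹`: `g.coeff k`
is the coefficient of `z^(-k)`, and `f(g(z)) = z` reads `[u^n] f(g) = δ_{n,-1}`. -/
theorem laurent_lagrange_inversion (F : LaurentSeries ℂ)
    (hF : ∀ k < (-1 : ℤ), F.coeff k = 0) (hF1 : F.coeff (-1) ≠ 0) :
    ∃ g : LaurentSeries ℂ,
      (∀ n : ℤ, n ≤ 0 → g.coeff n = 0) ∧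
      (∀ n : ℤ, 1 ≤ n → g.coeff n = (n : ℂ)⁻¹ * (F ^ n.toNat).coeff (-1)) ∧
      g.coeff 1 = F.coeff (-1) ∧
      (∀ n : ℤ, laurentSubstCoeff F g n = if n = -1 then 1 else 0) ∧
      (∀ g' : LaurentSeries ℂ, (∀ n : ℤ, n ≤ 0 → g'.coeff n = 0) →
        (∀ n : ℤ, laurentSubstCoeff F g' n = if n = -1 then 1 else 0) → g' = g) ∧
      (∀ F' : LaurentSeries ℂ, (∀ k < (-1 : ℤ), F'.coeff k = 0) → F'.coeff (-1) ≠ 0 →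
        (∀ n : ℤ, laurentSubstCoeff F' g n = if n = -1 then 1 else 0) → F' = F) := by
  have hord : F.order = -1 := order_eq_of_forall_lt_coeff_eq_zero hF hF1
  obtain ⟨g, ⟨hg, hfix⟩, huniq⟩ := existsUnique_lagrangeMap_eq_self F.powerSeriesPart
  have hg1 : g.coeff 1 = F.coeff (-1) := by
    rw [coeff_one_of_lagrangeMap_eq_self hfix, constantCoeff_powerSeriesPart, hord]
  have hg0 : g ≠ 0 := ne_zero_of_coeff_ne_zero (hg1 ▸ hF1)
  refine ⟨g, zero_lt_orderTop_iff_forall_coeff_eq_zero.1 hg,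
    lagrange_inversion_of_order_eq_neg_one hord hg hfix, hg1,
    (laurentSubstCoeff_eq_ite_iff hord hg hg0).2 hfix, fun g' hg' hsubst' => ?_,
    fun F' hF' hF1' hsubst' => ?_⟩
  · have hg'pos := zero_lt_orderTop_iff_forall_coeff_eq_zero.2 hg'
    have hg'0 : g' ≠ 0 := by
      rintro rfl
      simpa [laurentSubstCoeff] using hsubst' (-1)
    exact huniq g' ⟨hg'pos, (laurentSubstCoeff_eq_ite_iff hord hg'pos hg'0).1 hsubst'⟩
  · have hord' := order_eq_of_forall_lt_coeff_eq_zero hF' hF1'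
    refine eq_of_order_eq_of_powerSeriesPart_eq (hord'.trans hord.symm)
      (lagrangeMap_left_injective hg hg0 ?_)
    exact ((laurentSubstCoeff_eq_ite_iff hord' hg hg0).1 hsubst').trans hfix.symm
end

section
/- Let n and k be non-negative integers, τ ∈ ℂ, and a = (a₁, a₂, …) a sequence of complex numbers. Let α(l,m) = c₀ + c₁·l + c₂·m be an affine-linear complex-valued function of (l,m) (a polynomial of degree at most one in l and m) taking non-zero values for all l, m ∈ {0, …, n}. Then C(τ,k)·B̂_{n,k}(a) = ∑_{m=0}^{n} ∑_{l=0}^{m} (α(0,0)/α(l,m))·C(τ−α(l,m), k−l)·C(α(l,m), l)·B̂_{m,l}(a)·B̂_{n−m,k−l}(a). -/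
/-- The generalized binomial coefficient `C(τ,j) = τ(τ−1)⋯(τ−j+1)/j!` for `τ ∈ ℂ` and an
integer `j`, with the convention `C(τ,j) = 0` for `j < 0`. -/
noncomputable def genChoose (τ : ℂ) (j : ℤ) : ℂ :=
  if j < 0 then 0 else (∏ i ∈ Finset.range j.toNat, (τ - i)) / (j.toNat.factorial : ℂ)

/-- The partial ordinary Bell coefficient `B̂_{n,k}(a) = [x^n] (∑_{i≥1} a_i x^i)^k` for
`k ≥ 0`, with the convention `B̂_{n,k}(a) = 0` for `k < 0`.  (In particular
`B̂_{0,0}(a) = 1` and `B̂_{0,k}(a) = 0` for `k ≠ 0`.) -/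
noncomputable def bellHat (a : ℕ → ℂ) (n : ℕ) (k : ℤ) : ℂ :=
  if k < 0 then 0 else
    PowerSeries.coeff n ((PowerSeries.mk fun i => if i = 0 then 0 else a i) ^ k.toNat)

/-!
Expand `B̂_{n,k}(a) = [xⁿ] f^k`, `f = ∑ aᵢ xⁱ`, over the compositions `d` of `n` into `k` parts.
For a fixed `d` put `zᵢ = c₁ + c₂ dᵢ`, so that `α(|S|, ∑_{i∈S} dᵢ) = c₀ + z_S` for every
`S ⊆ {1,…,k}`. The falling-factorial analogue of Hurwitz's generalisation of Abel's identity,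
`(x+y)_k = ∑_S x/(x+z_S) · (x+z_S)_{|S|} · (y-z_S)_{k-|S|}`, taken at `x = c₀`, `y = τ - c₀`,
splits `k! C(τ,k)` into a sum over `S`. After exchanging the sums over `d` and `S`, each of the
`C(k,l)` subsets of size `l` contributes `l! (k-l)!` times the terms of the right-hand side with
that `l`, because a composition of `n` is a composition of some `m` on `S` together with one of
`n - m` on the complement.

Hurwitz's identity follows by induction on the index set once one knows that
`∑_S (x+z_S)_{|S|} (y-z_S)_{k-|S|}` depends only on `x + y`. Comparing its forward differences in
`x` and in `y` (by induction again) shows that it is unchanged by `(x, y) ↦ (x + 1, y - 1)`; on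
each line `x + y = c` it is a polynomial in `x`, hence constant.
-/

open Finset Polynomial
open scoped Nat

theorem descPochhammer_eval_succ_left {R : Type*} [CommRing R] (j : ℕ) (u : R) :
    (descPochhammer R (j + 1)).eval u = u * (descPochhammer R j).eval (u - 1) := by
  simp [descPochhammer_succ_left, eval_comp]

theorem descPochhammer_eval_add_one_sub_eval {R : Type*} [CommRing R] (m : ℕ) (u : R) :
    (descPochhammer R m).eval (u + 1) - (descPochhammer R m).eval u =
      m * (descPochhammer R (m - 1)).eval u := by
  cases m with
  | zero => simp
  | succ m =>
    rw [descPochhammer_eval_succ_left, descPochhammer_succ_eval, add_sub_cancel_right,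
      Nat.add_sub_cancel]
    push_cast
    ring

theorem Polynomial.eval_eq_of_forall_eval_add_one_eq {R : Type*} [CommRing R] [IsDomain R]
    [CharZero R] {p : R[X]} (hp : ∀ u, p.eval (u + 1) = p.eval u) (a b : R) :
    p.eval a = p.eval b := by
  have h_nat (n : ℕ) : p.eval (a + n) = p.eval a := by
    induction n with
    | zero => simp
    | succ n ih => rw [Nat.cast_succ, ← add_assoc, hp, ih]
  have hconst : p = C (p.eval a) := by
    refine eq_of_infinite_eval_eq _ _ (Set.infinite_of_injective_forall_mem
      (f := fun n : ℕ => a + n) (fun m n h => by simpa using h) fun n => ?_)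
    simpa using h_nat n
  rw [hconst, eval_C, eval_C]

namespace Finset

variable {ι M : Type*} [DecidableEq ι] [AddCommMonoid M]

theorem sum_powerset_sum_sdiff (s : Finset ι) (f : ι → Finset ι → M) :
    ∑ T ∈ s.powerset, ∑ i ∈ s \ T, f i T = ∑ i ∈ s, ∑ T ∈ (s.erase i).powerset, f i T := by
  rw [sum_comm' (t' := s) (s' := fun i => (s.erase i).powerset)]
  intro T i
  simp only [mem_powerset, mem_sdiff, subset_erase]
  tauto

theorem sum_powerset_sum_mem (s : Finset ι) (f : ι → Finset ι → M) :
    ∑ T ∈ s.powerset, ∑ i ∈ T, f i T =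
      ∑ i ∈ s, ∑ T ∈ (s.erase i).powerset, f i (insert i T) := by
  rw [sum_comm' (t' := s) (s' := fun i => (s.erase i).powerset.image (insert i))]
  · refine sum_congr rfl fun i _ => sum_image fun T hT U hU h => ?_
    simp only [coe_powerset, Set.mem_preimage, Set.mem_powerset_iff, coe_subset,
      subset_erase] at hT hU
    rw [← erase_insert hT.2, h, erase_insert hU.2]
  · intro T i
    simp only [mem_powerset, mem_image, subset_erase]
    constructor
    · rintro ⟨hTs, hiT⟩
      exact ⟨⟨T.erase i, ⟨(erase_subset i T).trans hTs, notMem_erase i T⟩,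
        insert_erase hiT⟩, hTs hiT⟩
    · rintro ⟨⟨U, ⟨hUs, -⟩, rfl⟩, his⟩
      exact ⟨insert_subset his hUs, mem_insert_self i U⟩

theorem sum_range_sum_range_eq_of_eq_zero (n k : ℕ)
    (T : ℕ → ℕ → M) (hT : ∀ l m, m < l ∨ k < l → T l m = 0) :
    ∑ m ∈ range (n + 1), ∑ l ∈ range (m + 1), T l m =
      ∑ l ∈ range (k + 1), ∑ m ∈ range (n + 1), T l m := by
  rw [sum_comm]
  refine sum_congr rfl fun m _ => ?_
  have hvanish (N : ℕ) : ∀ l ∈ range N, l ∉ range (min m k + 1) → T l m = 0 :=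
    fun l _ hl => hT l m (by simp only [mem_range] at hl; omega)
  rw [← sum_subset (range_subset_range.2 (by omega)) (hvanish (m + 1)),
    ← sum_subset (range_subset_range.2 (by omega)) (hvanish (k + 1))]

end Finset

section Hurwitz

variable {ι R : Type*} [CommRing R]

noncomputable def hurwitzSum (s : Finset ι) (z : ι → R) (x y : R) : R :=
  ∑ T ∈ s.powerset, (descPochhammer R #T).eval (x + ∑ i ∈ T, z i) *
    (descPochhammer R (#s - #T)).eval (y - ∑ i ∈ T, z i)

theorem hurwitzSum_add_one_left_sub [DecidableEq ι] (s : Finset ι) (z : ι → R) (x y : R) :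
    hurwitzSum s z (x + 1) y - hurwitzSum s z x y =
      ∑ i ∈ s, hurwitzSum (s.erase i) z (x + z i) (y - z i) := by
  have hterm (T : Finset ι) :
      (descPochhammer R #T).eval (x + 1 + ∑ i ∈ T, z i) -
          (descPochhammer R #T).eval (x + ∑ i ∈ T, z i)
        = ∑ _i ∈ T, (descPochhammer R (#T - 1)).eval (x + ∑ i ∈ T, z i) := by
    rw [sum_const, nsmul_eq_mul, ← descPochhammer_eval_add_one_sub_eval, add_right_comm]
  simp only [hurwitzSum, ← sum_sub_distrib, ← sub_mul, hterm, sum_mul]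
  rw [sum_powerset_sum_mem]
  refine sum_congr rfl fun i hi => sum_congr rfl fun T hT => ?_
  have hiT : i ∉ T := fun h => by simpa using mem_powerset.1 hT h
  rw [sum_insert hiT, card_insert_of_notMem hiT, card_erase_of_mem hi, Nat.add_sub_cancel,
    Nat.sub_sub, add_comm 1, ← add_assoc, sub_add_eq_sub_sub]

theorem hurwitzSum_add_one_right_sub [DecidableEq ι] (s : Finset ι) (z : ι → R) (x y : R) :
    hurwitzSum s z x (y + 1) - hurwitzSum s z x y = ∑ i ∈ s, hurwitzSum (s.erase i) z x y := by
  have hterm (T : Finset ι) (hT : T ⊆ s) :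
      (descPochhammer R (#s - #T)).eval (y + 1 - ∑ i ∈ T, z i) -
          (descPochhammer R (#s - #T)).eval (y - ∑ i ∈ T, z i)
        = ∑ _i ∈ s \ T, (descPochhammer R (#s - #T - 1)).eval (y - ∑ i ∈ T, z i) := by
    rw [sum_const, nsmul_eq_mul, card_sdiff_of_subset hT, ← descPochhammer_eval_add_one_sub_eval,
      add_sub_right_comm]
  simp only [hurwitzSum, ← sum_sub_distrib, ← mul_sub]
  rw [sum_congr rfl fun T hT => by rw [hterm T (mem_powerset.1 hT), mul_sum],
    sum_powerset_sum_sdiff]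
  refine sum_congr rfl fun i hi => sum_congr rfl fun T _ => ?_
  rw [card_erase_of_mem hi, Nat.sub_right_comm]

theorem hurwitzSum_sub_eq_eval (s : Finset ι) (z : ι → R) (c u : R) :
    hurwitzSum s z u (c - u) = (∑ T ∈ s.powerset,
      (descPochhammer R #T).comp (X + C (∑ i ∈ T, z i)) *
        (descPochhammer R (#s - #T)).comp (C (c - ∑ i ∈ T, z i) - X)).eval u := by
  simp only [hurwitzSum, eval_finsetSum, eval_mul, eval_comp, eval_add, eval_sub, eval_X, eval_C]
  refine sum_congr rfl fun T _ => ?_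
  ring_nf

theorem hurwitzSum_add_sub [DecidableEq ι] [IsDomain R] [CharZero R] (s : Finset ι) (z : ι → R)
    (x y w : R) :
    hurwitzSum s z (x + w) (y - w) = hurwitzSum s z x y := by
  induction s using Finset.strongInduction generalizing x y w with
  | H s ih =>
    have hshift (x y : R) : hurwitzSum s z (x + 1) y = hurwitzSum s z x (y + 1) := by
      have hsum : ∑ i ∈ s, hurwitzSum (s.erase i) z (x + z i) (y - z i) =
          ∑ i ∈ s, hurwitzSum (s.erase i) z x y :=
        sum_congr rfl fun i hi => ih _ (erase_ssubset hi) x y (z i)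
      linear_combination hurwitzSum_add_one_left_sub s z x y -
        hurwitzSum_add_one_right_sub s z x y + hsum
    obtain ⟨c, rfl⟩ : ∃ c, y = c - x := ⟨x + y, by ring⟩
    rw [sub_sub, hurwitzSum_sub_eq_eval, hurwitzSum_sub_eq_eval]
    refine eval_eq_of_forall_eval_add_one_eq (fun u => ?_) _ _
    rw [← hurwitzSum_sub_eq_eval, ← hurwitzSum_sub_eq_eval, hshift]
    ring_nf

end Hurwitz

theorem descPochhammer_eval_add_eq_sum_powerset {ι K : Type*} [DecidableEq ι] [Field K]
    [CharZero K] (s : Finset ι) (z : ι → K) (x y : K)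
    (hx : ∀ T ⊆ s, x + ∑ i ∈ T, z i ≠ 0) :
    (descPochhammer K #s).eval (x + y) = ∑ T ∈ s.powerset,
      x / (x + ∑ i ∈ T, z i) * (descPochhammer K #T).eval (x + ∑ i ∈ T, z i) *
        (descPochhammer K (#s - #T)).eval (y - ∑ i ∈ T, z i) := by
  induction s using Finset.induction_on generalizing y with
  | empty => simpa using (div_self (by simpa using hx ∅ (empty_subset _))).symm
  | insert j t hj ih =>
    have hxt : ∀ T ⊆ t, x + ∑ i ∈ T, z i ≠ 0 := fun T hT => hx T (hT.trans (subset_insert j t))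
    have hfirst (T : Finset ι) (hT : T ∈ t.powerset) :
        x / (x + ∑ i ∈ T, z i) * (descPochhammer K #T).eval (x + ∑ i ∈ T, z i) *
            (descPochhammer K (#(insert j t) - #T)).eval (y - ∑ i ∈ T, z i) =
          (x + y) * (x / (x + ∑ i ∈ T, z i) * (descPochhammer K #T).eval (x + ∑ i ∈ T, z i) *
            (descPochhammer K (#t - #T)).eval (y - 1 - ∑ i ∈ T, z i)) -
          x * ((descPochhammer K #T).eval (x + ∑ i ∈ T, z i) *
            (descPochhammer K (#t - #T)).eval (y - 1 - ∑ i ∈ T, z i)) := by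
      have hT' := mem_powerset.1 hT
      -- `y - z_T = (x + y) - (x + z_T)`
      rw [card_insert_of_notMem hj, Nat.sub_add_comm (card_le_card hT'),
        descPochhammer_eval_succ_left, sub_right_comm]
      field_simp [hxt T hT']
      ring
    have hsecond (T : Finset ι) (hT : T ∈ t.powerset) :
        x / (x + ∑ i ∈ insert j T, z i) *
            (descPochhammer K #(insert j T)).eval (x + ∑ i ∈ insert j T, z i) *
            (descPochhammer K (#(insert j t) - #(insert j T))).eval (y - ∑ i ∈ insert j T, z i) =
          x * ((descPochhammer K #T).eval (x + (z j - 1) + ∑ i ∈ T, z i) *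
            (descPochhammer K (#t - #T)).eval (y - 1 - (z j - 1) - ∑ i ∈ T, z i)) := by
      have hjT : j ∉ T := fun h => hj (mem_powerset.1 hT h)
      have hne := hx (insert j T) (insert_subset_insert j (mem_powerset.1 hT))
      rw [sum_insert hjT] at hne ⊢
      rw [card_insert_of_notMem hjT, card_insert_of_notMem hj, Nat.add_sub_add_right,
        descPochhammer_eval_succ_left]
      field_simp
      ring_nf
    calc (descPochhammer K #(insert j t)).eval (x + y)
        = (x + y) * (descPochhammer K #t).eval (x + (y - 1)) - x * hurwitzSum t z x (y - 1) +
            x * hurwitzSum t z (x + (z j - 1)) (y - 1 - (z j - 1)) := by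
          rw [hurwitzSum_add_sub, card_insert_of_notMem hj, descPochhammer_eval_succ_left]
          ring_nf
      _ = _ := by
          rw [sum_powerset_insert hj, sum_congr rfl hfirst, sum_congr rfl hsecond, sum_sub_distrib,
            ← mul_sum, ← mul_sum, ← mul_sum, ih (y - 1) hxt]
          rfl

namespace Finsupp

variable {ι μ : Type*} [AddCommMonoid μ] {A B : Finset ι} {d d₁ d₂ : ι →₀ μ}

theorem apply_eq_zero_of_support_subset {C : Finset ι} (hd : d.support ⊆ C) {i : ι}
    (hi : i ∉ C) : d i = 0 :=
  notMem_support_iff.1 fun h => hi (hd h)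

theorem filter_mem_add_filter_mem [DecidableEq ι] (hAB : Disjoint A B)
    (hd : d.support ⊆ A ∪ B) : d.filter (· ∈ A) + d.filter (· ∈ B) = d := by
  ext i
  by_cases hA : i ∈ A
  · simp [hA, Finset.disjoint_left.1 hAB hA]
  by_cases hB : i ∈ B
  · simp [hA, hB]
  · simp [hA, hB, apply_eq_zero_of_support_subset hd (i := i) (by simp [hA, hB])]

theorem filter_mem_add_eq_left [DecidableEq ι] (hAB : Disjoint A B) (h₁ : d₁.support ⊆ A)
    (h₂ : d₂.support ⊆ B) : (d₁ + d₂).filter (· ∈ A) = d₁ := by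
  ext i
  by_cases hA : i ∈ A
  · simp [hA, apply_eq_zero_of_support_subset h₂ (Finset.disjoint_left.1 hAB hA)]
  · simp [hA, apply_eq_zero_of_support_subset h₁ hA]

end Finsupp

namespace Finset

theorem sum_finsuppAntidiag_union {ι μ M : Type*} [DecidableEq ι] [AddCommMonoid μ]
    [HasAntidiagonal μ] [DecidableEq μ] [AddCommMonoid M] {A B : Finset ι} (hAB : Disjoint A B)
    (n : μ) (F : (ι →₀ μ) → M) :
    ∑ d ∈ finsuppAntidiag (A ∪ B) n, F d =
      ∑ p ∈ antidiagonal n, ∑ d₁ ∈ finsuppAntidiag A p.1, ∑ d₂ ∈ finsuppAntidiag B p.2,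
        F (d₁ + d₂) := by
  have hmaps : ∀ d ∈ finsuppAntidiag (A ∪ B) n,
      (∑ i ∈ A, d i, ∑ i ∈ B, d i) ∈ antidiagonal n := fun d hd => by
    rw [HasAntidiagonal.mem_antidiagonal, ← sum_union hAB, (mem_finsuppAntidiag.1 hd).1]
  rw [← sum_fiberwise_of_maps_to hmaps]
  refine sum_congr rfl fun p hp => ?_
  rw [← sum_product']
  have hsplit {d} (hd : d ∈ {d ∈ finsuppAntidiag (A ∪ B) n | (∑ i ∈ A, d i, ∑ i ∈ B, d i) = p}) :=
    Finsupp.filter_mem_add_filter_mem hAB (mem_finsuppAntidiag.1 (mem_filter.1 hd).1).2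
  refine sum_nbij' (fun d => (d.filter (· ∈ A), d.filter (· ∈ B))) (fun q => q.1 + q.2)
    ?_ ?_ (fun d hd => hsplit hd) ?_ (fun d hd => by rw [hsplit hd])
  · intro d hd
    simp only [mem_filter, mem_finsuppAntidiag, Prod.ext_iff] at hd
    simp only [mem_product, mem_finsuppAntidiag, Finsupp.support_filter]
    refine ⟨⟨?_, fun i hi => (mem_filter.1 hi).2⟩, ?_, fun i hi => (mem_filter.1 hi).2⟩
    · rw [← hd.2.1]; exact sum_congr rfl fun i hi => Finsupp.filter_apply_pos _ _ hi
    · rw [← hd.2.2]; exact sum_congr rfl fun i hi => Finsupp.filter_apply_pos _ _ hi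
  · rintro ⟨d₁, d₂⟩ hd
    simp only [mem_product, mem_finsuppAntidiag] at hd
    obtain ⟨⟨h₁, hs₁⟩, h₂, hs₂⟩ := hd
    have hA : ∑ i ∈ A, (d₁ + d₂) i = p.1 := by
      simp only [Finsupp.add_apply, sum_add_distrib, h₁, add_zero,
        sum_eq_zero fun i hi => Finsupp.apply_eq_zero_of_support_subset hs₂
          (disjoint_left.1 hAB hi)]
    have hB : ∑ i ∈ B, (d₁ + d₂) i = p.2 := by
      simp only [Finsupp.add_apply, sum_add_distrib, h₂, zero_add,
        sum_eq_zero fun i hi => Finsupp.apply_eq_zero_of_support_subset hs₁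
          (disjoint_right.1 hAB hi)]
    simp only [mem_filter, mem_finsuppAntidiag, Prod.ext_iff]
    refine ⟨⟨?_, Finsupp.support_add.trans (union_subset_union hs₁ hs₂)⟩, hA, hB⟩
    rw [sum_union hAB, hA, hB, HasAntidiagonal.mem_antidiagonal.1 hp]
  · rintro ⟨d₁, d₂⟩ hd
    simp only [mem_product, mem_finsuppAntidiag] at hd
    obtain ⟨⟨-, hs₁⟩, -, hs₂⟩ := hd
    rw [Finsupp.filter_mem_add_eq_left hAB hs₁ hs₂, add_comm,
      Finsupp.filter_mem_add_eq_left hAB.symm hs₂ hs₁]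

end Finset

namespace PowerSeries

theorem sum_finsuppAntidiag_mul_prod_coeff {R ι : Type*} [CommSemiring R] [DecidableEq ι]
    {A B : Finset ι} (hAB : Disjoint A B) (f : ι → R⟦X⟧) (w : ℕ → R) (n : ℕ) :
    ∑ d ∈ finsuppAntidiag (A ∪ B) n, w (∑ i ∈ A, d i) * ∏ i ∈ A ∪ B, coeff (d i) (f i) =
      ∑ p ∈ antidiagonal n, w p.1 * (coeff p.1 (∏ i ∈ A, f i) * coeff p.2 (∏ i ∈ B, f i)) := by
  rw [sum_finsuppAntidiag_union hAB]
  refine sum_congr rfl fun p _ => ?_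
  rw [coeff_prod, coeff_prod, sum_mul_sum, mul_sum]
  refine sum_congr rfl fun d₁ h₁ => ?_
  rw [mul_sum]
  refine sum_congr rfl fun d₂ h₂ => ?_
  obtain ⟨hsum₁, hs₁⟩ := mem_finsuppAntidiag.1 h₁
  obtain ⟨-, hs₂⟩ := mem_finsuppAntidiag.1 h₂
  have hA : ∀ i ∈ A, (d₁ + d₂) i = d₁ i := fun i hi => by
    rw [Finsupp.add_apply,
      Finsupp.apply_eq_zero_of_support_subset hs₂ (disjoint_left.1 hAB hi), add_zero]
  have hB : ∀ i ∈ B, (d₁ + d₂) i = d₂ i := fun i hi => by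
    rw [Finsupp.add_apply,
      Finsupp.apply_eq_zero_of_support_subset hs₁ (disjoint_right.1 hAB hi), zero_add]
  rw [prod_union hAB, sum_congr rfl hA, hsum₁,
    prod_congr rfl fun i hi => congrArg (fun m => coeff m (f i)) (hA i hi),
    prod_congr rfl fun i hi => congrArg (fun m => coeff m (f i)) (hB i hi)]

end PowerSeries

section Bell

open PowerSeries

noncomputable def bellSeries (a : ℕ → ℂ) : ℂ⟦X⟧ := PowerSeries.mk fun i => if i = 0 then 0 else a i

variable (a : ℕ → ℂ)

theorem bellHat_natCast (n k : ℕ) : bellHat a n k = coeff n (bellSeries a ^ k) := by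
  simp [bellHat, bellSeries]

theorem bellHat_natCast_sub (n : ℕ) {k l : ℕ} (h : l ≤ k) :
    bellHat a n ((k : ℤ) - l) = coeff n (bellSeries a ^ (k - l)) := by
  rw [← Nat.cast_sub h, bellHat_natCast]

theorem bellHat_of_neg (n : ℕ) {k : ℤ} (hk : k < 0) : bellHat a n k = 0 := if_pos hk

theorem constantCoeff_bellSeries : constantCoeff (bellSeries a) = 0 := by
  simp [bellSeries, ← coeff_zero_eq_constantCoeff_apply]

theorem bellHat_of_lt {m l : ℕ} (h : m < l) : bellHat a m l = 0 := by
  rw [bellHat_natCast]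
  exact X_pow_dvd_iff.1 (pow_dvd_pow_of_dvd (X_dvd_iff.2 (constantCoeff_bellSeries a)) l) m h

theorem sum_finsuppAntidiag_mul_prod_coeff_bellSeries {k : ℕ} (S : Finset (Fin k)) (w : ℕ → ℂ)
    (n : ℕ) :
    ∑ d ∈ finsuppAntidiag univ n, w (∑ i ∈ S, d i) * ∏ i, coeff (d i) (bellSeries a) =
      ∑ m ∈ range (n + 1), w m * bellHat a m #S * bellHat a (n - m) ((k : ℤ) - #S) := by
  rw [← union_compl S, sum_finsuppAntidiag_mul_prod_coeff disjoint_compl_right,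
    Nat.sum_antidiagonal_eq_sum_range_succ_mk]
  refine sum_congr rfl fun m _ => ?_
  rw [prod_const, prod_const, card_compl, Fintype.card_fin, bellHat_natCast,
    bellHat_natCast_sub a _ (by simpa using card_le_univ S), mul_assoc]

end Bell

theorem genChoose_natCast (τ : ℂ) (j : ℕ) : genChoose τ j = (descPochhammer ℂ j).eval τ / j ! := by
  simp [genChoose, descPochhammer_eval_eq_prod_range]

theorem genChoose_natCast_sub (τ : ℂ) {k l : ℕ} (h : l ≤ k) :
    genChoose τ ((k : ℤ) - l) = (descPochhammer ℂ (k - l)).eval τ / (k - l)! := by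
  rw [← Nat.cast_sub h, genChoose_natCast]

noncomputable def hurwitzWeight (τ c₀ α : ℂ) (k l : ℕ) : ℂ :=
  c₀ / α * genChoose (τ - α) ((k : ℤ) - l) * genChoose α l

theorem factorial_mul_hurwitzWeight (τ c₀ α : ℂ) {k l : ℕ} (h : l ≤ k) :
    (l ! * (k - l)! : ℂ) * hurwitzWeight τ c₀ α k l =
      c₀ / α * (descPochhammer ℂ l).eval α * (descPochhammer ℂ (k - l)).eval (τ - α) := by
  have hl : (l ! : ℂ) ≠ 0 := Nat.cast_ne_zero.2 l.factorial_ne_zero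
  have hkl : ((k - l)! : ℂ) ≠ 0 := Nat.cast_ne_zero.2 (k - l).factorial_ne_zero
  rw [hurwitzWeight, genChoose_natCast_sub _ h, genChoose_natCast]
  field_simp

theorem descPochhammer_eval_eq_sum_powerset_hurwitzWeight {ι : Type*} [DecidableEq ι]
    (s : Finset ι) (d : ι → ℕ) (τ c₀ c₁ c₂ : ℂ)
    (hα : ∀ T ⊆ s, c₀ + c₁ * #T + c₂ * ↑(∑ i ∈ T, d i) ≠ 0) :
    (descPochhammer ℂ #s).eval τ = ∑ T ∈ s.powerset,
      ((#T)! * (#s - #T)! : ℂ) *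
        hurwitzWeight τ c₀ (c₀ + c₁ * #T + c₂ * ↑(∑ i ∈ T, d i)) #s #T := by
  have hz (T : Finset ι) : c₀ + ∑ i ∈ T, (c₁ + c₂ * d i) = c₀ + c₁ * #T + c₂ * ↑(∑ i ∈ T, d i) := by
    rw [sum_add_distrib, ← mul_sum, sum_const, nsmul_eq_mul, Nat.cast_sum]
    ring
  have hH := descPochhammer_eval_add_eq_sum_powerset s (fun i => c₁ + c₂ * d i) c₀ (τ - c₀)
    fun T hT => hz T ▸ hα T hT
  rw [add_sub_cancel] at hH
  rw [hH]
  refine sum_congr rfl fun T hT => ?_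
  rw [factorial_mul_hurwitzWeight _ _ _ (card_le_card (mem_powerset.1 hT)), ← hz, sub_sub]

theorem factorial_mul_genChoose_mul_bellHat (n k : ℕ) (τ : ℂ) (a : ℕ → ℂ) (c₀ c₁ c₂ : ℂ)
    (hα : ∀ l m : ℕ, l ≤ n → m ≤ n → c₀ + c₁ * l + c₂ * m ≠ 0) :
    (k ! : ℂ) * (genChoose τ k * bellHat a n k) =
      ∑ S ∈ (univ : Finset (Fin k)).powerset, ((#S)! * (k - #S)! : ℂ) *
        ∑ m ∈ range (n + 1), hurwitzWeight τ c₀ (c₀ + c₁ * #S + c₂ * m) k #S *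
          bellHat a m #S * bellHat a (n - m) ((k : ℤ) - #S) := by
  have hpow : bellSeries a ^ k = ∏ _i : Fin k, bellSeries a := by simp
  have hterm (d : Fin k →₀ ℕ) (hd : d ∈ finsuppAntidiag univ n) :
      (descPochhammer ℂ k).eval τ * ∏ i, PowerSeries.coeff (d i) (bellSeries a) =
        ∑ S ∈ (univ : Finset (Fin k)).powerset, (#S)! * (k - #S)! *
          hurwitzWeight τ c₀ (c₀ + c₁ * #S + c₂ * ↑(∑ i ∈ S, d i)) k #S *
            ∏ i, PowerSeries.coeff (d i) (bellSeries a) := by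
    -- Only compositions with positive parts contribute, and for them `#T ≤ ∑ i ∈ T, d i ≤ n`.
    by_cases hP : ∏ i, PowerSeries.coeff (d i) (bellSeries a) = 0
    · simp [hP]
    have hpos (i : Fin k) : 1 ≤ d i := by
      by_contra! h
      refine hP (prod_eq_zero (mem_univ i) ?_)
      rw [Nat.lt_one_iff.1 h, PowerSeries.coeff_zero_eq_constantCoeff_apply,
        constantCoeff_bellSeries]
    have hsum (T : Finset (Fin k)) : ∑ i ∈ T, d i ≤ n :=
      (mem_finsuppAntidiag.1 hd).1 ▸ sum_le_sum_of_subset (subset_univ T)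
    have hcard (T : Finset (Fin k)) : #T ≤ ∑ i ∈ T, d i := by
      simpa using card_nsmul_le_sum T d 1 fun i _ => hpos i
    have hH := descPochhammer_eval_eq_sum_powerset_hurwitzWeight univ d τ c₀ c₁ c₂
      fun T _ => by exact_mod_cast hα _ _ ((hcard T).trans (hsum T)) (hsum T)
    rw [card_univ, Fintype.card_fin] at hH
    rw [← sum_mul, ← hH]
  rw [genChoose_natCast, bellHat_natCast, hpow, PowerSeries.coeff_prod, ← mul_assoc,
    mul_div_cancel₀ _ (Nat.cast_ne_zero.2 k.factorial_ne_zero), mul_sum, sum_congr rfl hterm,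
    sum_comm]
  refine sum_congr rfl fun S _ => ?_
  rw [← sum_finsuppAntidiag_mul_prod_coeff_bellSeries a S
    (fun m => hurwitzWeight τ c₀ (c₀ + c₁ * #S + c₂ * m) k #S)]
  simp only [mul_assoc, ← mul_sum]

/-- **Lemma (lem:1).** Let `n, k` be non-negative integers, `τ ∈ ℂ`, and `a = (a₁, a₂, …)`
a sequence of complex numbers.  Let `α(l,m) = c₀ + c₁·l + c₂·m` be an affine-linear
complex-valued function of `(l,m)` taking non-zero values for all `l, m ∈ {0,…,n}`
(note `α(0,0) = c₀`).  Then
`C(τ,k)·B̂_{n,k}(a) = ∑_{m=0}^{n} ∑_{l=0}^{m} (α(0,0)/α(l,m))·C(τ−α(l,m), k−l)·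
C(α(l,m), l)·B̂_{m,l}(a)·B̂_{n−m,k−l}(a)`. -/
theorem genChoose_mul_bellHat_eq_sum (n k : ℕ) (τ : ℂ) (a : ℕ → ℂ) (c₀ c₁ c₂ : ℂ)
    (hα : ∀ l m : ℕ, l ≤ n → m ≤ n → c₀ + c₁ * l + c₂ * m ≠ 0) :
    genChoose τ k * bellHat a n k =
      ∑ m ∈ Finset.range (n + 1), ∑ l ∈ Finset.range (m + 1),
        (c₀ / (c₀ + c₁ * l + c₂ * m)) *
          genChoose (τ - (c₀ + c₁ * l + c₂ * m)) ((k : ℤ) - l) *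
          genChoose (c₀ + c₁ * l + c₂ * m) l *
          bellHat a m l * bellHat a (n - m) ((k : ℤ) - l) := by
  set V : ℕ → ℂ := fun l => ∑ m ∈ range (n + 1),
    hurwitzWeight τ c₀ (c₀ + c₁ * l + c₂ * m) k l * bellHat a m l * bellHat a (n - m) ((k : ℤ) - l)
  refine mul_left_cancel₀ (Nat.cast_ne_zero.2 k.factorial_ne_zero : (k ! : ℂ) ≠ 0) ?_
  calc (k ! : ℂ) * (genChoose τ k * bellHat a n k)
      = ∑ S ∈ (univ : Finset (Fin k)).powerset, (#S)! * (k - #S)! * V #S :=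
        factorial_mul_genChoose_mul_bellHat n k τ a c₀ c₁ c₂ hα
    _ = ∑ l ∈ range (k + 1), k.choose l • ((l ! * (k - l)! : ℂ) * V l) := by
        rw [sum_powerset_apply_card (fun l => (l ! * (k - l)! : ℂ) * V l), card_univ,
          Fintype.card_fin]
    _ = k ! * ∑ l ∈ range (k + 1), V l := by
        rw [mul_sum]
        refine sum_congr rfl fun l hl => ?_
        rw [nsmul_eq_mul, ← mul_assoc, ← mul_assoc, ← Nat.cast_mul, ← Nat.cast_mul,
          Nat.choose_mul_factorial_mul_factorial (Nat.lt_succ_iff.1 (mem_range.1 hl))]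
    _ = _ := by
        rw [sum_range_sum_range_eq_of_eq_zero n k]
        · rfl
        · rintro l m (hml | hkl)
          · rw [bellHat_of_lt a hml, mul_zero, zero_mul]
          · rw [bellHat_of_neg a (n - m) (k := (k : ℤ) - l) (by omega), mul_zero]
end

section
/- Let f = 1 + ∑_{k≥1} f_k x^k be a formal power series with complex coefficients and constant term 1. Then for every integer n ≥ 1, [x^{n−1}] f^n = ∑_{a+b=n, a≥1, b≥0} (1/a)·([x^{a−1}] f^a)·([x^b] f^b). -/
/-! Lagrange inversion. Let `w = X * S` with `S = f(w)`, i.e. `w = X f(w)`. For every series `g`,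
`[X^m] g = [X^m] S^{-(m+1)} g(w) w'`: in `g(w) = ∑ gⱼ (X S)ʲ` the terms with `j > m` are
multiples of `X^(m+1)`, and the term `j ≤ m` contributes `[X^(m-j)] S^{-(m-j+1)} w'`, a formal
residue which is `1` for `j = m` and `0` for `j < m`. With `g = f^(m+1)` and `g = f^b` this
gives `[X^m] f^(m+1) = (m+1) [X^m] S` and `[X^b] f^b = [X^b] S⁻¹ w'`, and the identity is the
coefficient of `X^(n-1)` in `S · (S⁻¹ w') = w'`. -/

open PowerSeries Finset

namespace PowerSeries

variable {K : Type*} [Field K]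

theorem coeff_pow_mul_derivative [CharZero K] (v : K⟦X⟧) (k : ℕ) :
    coeff k (v ^ k * d⁄dX K v) = coeff (k + 1) (v ^ (k + 1)) := by
  have h := coeff_derivative (v ^ (k + 1)) k
  rw [derivative_pow, add_tsub_cancel_right, mul_assoc, ← map_natCast (C (R := K)),
    coeff_C_mul] at h
  push_cast at h
  exact mul_left_cancel₀ (Nat.cast_add_one_ne_zero k) (by rw [h, mul_comm])

theorem coeff_inv_pow_succ_mul_derivative_X_mul [CharZero K] {S : K⟦X⟧}
    (hS : constantCoeff S ≠ 0) (d : ℕ) :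
    coeff d (S⁻¹ ^ (d + 1) * d⁄dX K (X * S)) = if d = 0 then 1 else 0 := by
  set v := S⁻¹
  have hvS : v * S = 1 := PowerSeries.inv_mul_cancel S hS
  have hdvS : v * d⁄dX K S + S * d⁄dX K v = 0 := by
    simpa [Derivation.leibniz, smul_eq_mul] using congrArg (d⁄dX K) hvS
  have hdw : d⁄dX K (X * S) = S + X * d⁄dX K S := by
    rw [Derivation.leibniz, derivative_X, smul_eq_mul, smul_eq_mul]; ring
  rcases d with _ | k
  · rw [hdw, zero_add, pow_one, mul_add, hvS, mul_left_comm, map_add,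
      coeff_zero_eq_constantCoeff, map_one]
    simp
  -- `(k + 1) v^k v' = (v^(k+1))'`, so the two terms cancel in degree `k + 1`
  · have : v ^ (k + 2) * d⁄dX K (X * S) = v ^ (k + 1) - X * (v ^ k * d⁄dX K v) := by
      rw [hdw]
      linear_combination (v ^ (k + 1) - X * v ^ k * d⁄dX K v) * hvS + X * v ^ (k + 1) * hdvS
    rw [this, map_sub, coeff_succ_X_mul, coeff_pow_mul_derivative, sub_self, if_neg k.succ_ne_zero]

theorem inv_pow_mul_X_mul_pow {S : K⟦X⟧} (hS : constantCoeff S ≠ 0) (n : ℕ) :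
    S⁻¹ ^ n * (X * S) ^ n = X ^ n := by
  rw [← mul_pow, mul_left_comm, PowerSeries.inv_mul_cancel S hS, mul_one]

theorem coeff_inv_pow_succ_mul_X_mul_pow_mul_derivative [CharZero K] {S : K⟦X⟧}
    (hS : constantCoeff S ≠ 0) (m j : ℕ) :
    coeff m (S⁻¹ ^ (m + 1) * (X * S) ^ j * d⁄dX K (X * S)) = coeff m (X ^ j : K⟦X⟧) := by
  rcases le_or_gt j m with hjm | hmj
  · obtain ⟨d, rfl⟩ := Nat.exists_eq_add_of_le hjm
    have hfactor : S⁻¹ ^ (j + d + 1) * (X * S) ^ j * d⁄dX K (X * S) =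
        X ^ j * (S⁻¹ ^ (d + 1) * d⁄dX K (X * S)) := by
      rw [← inv_pow_mul_X_mul_pow hS j]; ring
    rw [hfactor, coeff_X_pow_mul', if_pos (Nat.le_add_right j d), Nat.add_sub_cancel_left,
      coeff_inv_pow_succ_mul_derivative_X_mul hS, coeff_X_pow]
    simp
  · obtain ⟨d, rfl⟩ := Nat.exists_eq_add_of_lt hmj
    have hfactor : S⁻¹ ^ (m + 1) * (X * S) ^ (m + d + 1) * d⁄dX K (X * S) =
        X ^ (m + 1) * ((X * S) ^ d * d⁄dX K (X * S)) := by
      rw [← inv_pow_mul_X_mul_pow hS (m + 1)]; ring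
    rw [hfactor, coeff_X_pow_mul', if_neg (by omega), coeff_X_pow, if_neg (by omega)]

theorem coeff_inv_pow_succ_mul_subst_mul_derivative [CharZero K] {S : K⟦X⟧}
    (hS : constantCoeff S ≠ 0) (g : K⟦X⟧) (m : ℕ) :
    coeff m (S⁻¹ ^ (m + 1) * g.subst (X * S) * d⁄dX K (X * S)) = coeff m g := by
  have hw : HasSubst (X * S) := HasSubst.X'.mul_left
  have hpoly (p : Polynomial K) :
      coeff m (S⁻¹ ^ (m + 1) * (p : K⟦X⟧).subst (X * S) * d⁄dX K (X * S)) =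
        coeff m (p : K⟦X⟧) := by
    rw [subst_coe hw]
    induction p using Polynomial.induction_on' with
    | add p q hp hq => simp only [map_add, mul_add, add_mul, hp, hq, Polynomial.coe_add]
    | monomial j a =>
      have hfactor : S⁻¹ ^ (m + 1) * (algebraMap K K⟦X⟧ a * (X * S) ^ j) * d⁄dX K (X * S) =
          C a * (S⁻¹ ^ (m + 1) * (X * S) ^ j * d⁄dX K (X * S)) := by
        rw [show algebraMap K K⟦X⟧ a = C a from rfl]; ring
      rw [Polynomial.aeval_monomial, hfactor, coeff_C_mul,
        coeff_inv_pow_succ_mul_X_mul_pow_mul_derivative hS, Polynomial.coe_monomial,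
        monomial_eq_C_mul_X_pow, coeff_C_mul]
  obtain ⟨h, hh⟩ : X ^ (m + 1) ∣ g - (trunc (m + 1) g : K⟦X⟧) :=
    X_pow_dvd_iff.mpr fun i hi => by rw [map_sub, coeff_coe_trunc_of_lt hi, sub_self]
  rw [sub_eq_iff_eq_add'] at hh
  have htail :
      coeff m (S⁻¹ ^ (m + 1) * (X ^ (m + 1) * h).subst (X * S) * d⁄dX K (X * S)) = 0 := by
    rw [subst_mul hw, subst_pow hw, subst_X hw, ← mul_assoc, inv_pow_mul_X_mul_pow hS,
      mul_assoc, coeff_X_pow_mul', if_neg (by omega)]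
  rw [hh, subst_add hw, mul_add, add_mul, map_add, hpoly, htail, map_add, coeff_X_pow_mul',
    if_neg (by omega), add_zero]

theorem exists_subst_X_mul_eq {f : K⟦X⟧} (hf : constantCoeff f ≠ 0) :
    ∃ S : K⟦X⟧, constantCoeff S ≠ 0 ∧ f.subst (X * S) = S := by
  set P : K⟦X⟧ := X * f⁻¹
  have hP0 : constantCoeff P = 0 := by simp [P]
  have hP1 : IsUnit (coeff 1 P) := by
    rw [coeff_succ_X_mul, coeff_zero_eq_constantCoeff_apply, constantCoeff_inv]
    exact (inv_ne_zero hf).isUnit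
  set w := P.substInvOfIsUnit hP1
  have hw : HasSubst w := HasSubst.substInvOfIsUnit P hP1
  have hfw : f⁻¹.subst w * f.subst w = 1 := by
    rw [← subst_mul hw, PowerSeries.inv_mul_cancel f hf, ← coe_substAlgHom hw, map_one]
  have hPw : w * f⁻¹.subst w = X := by
    have h := subst_substInvOfIsUnit_right P hP0 hP1
    rwa [subst_mul hw, subst_X hw] at h
  have hw_eq : w = X * f.subst w := by
    rw [← hPw, mul_assoc, hfw, mul_one]
  refine ⟨f.subst w, ?_, by rw [← hw_eq]⟩
  rw [← coeff_zero_eq_constantCoeff_apply, ← coeff_succ_X_mul, ← hw_eq,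
    coeff_one_substInvOfIsUnit]
  exact Units.ne_zero _

section LagrangeInversion

variable [CharZero K] {f S : K⟦X⟧}

theorem coeff_pow_succ_of_subst_X_mul_eq (hS : constantCoeff S ≠ 0) (hfS : f.subst (X * S) = S)
    (m : ℕ) :
    coeff m (f ^ (m + 1)) = (m + 1) * coeff m S := by
  have h := coeff_inv_pow_succ_mul_subst_mul_derivative hS (f ^ (m + 1)) m
  rw [subst_pow HasSubst.X'.mul_left, hfS, ← mul_pow, PowerSeries.inv_mul_cancel S hS, one_pow,
    one_mul, coeff_derivative, coeff_succ_X_mul] at h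
  rw [← h, mul_comm]

theorem coeff_pow_of_subst_X_mul_eq (hS : constantCoeff S ≠ 0) (hfS : f.subst (X * S) = S)
    (b : ℕ) :
    coeff b (f ^ b) = coeff b (S⁻¹ * d⁄dX K (X * S)) := by
  have h := coeff_inv_pow_succ_mul_subst_mul_derivative hS (f ^ b) b
  have hS_pow : S⁻¹ ^ (b + 1) * S ^ b = S⁻¹ := by
    rw [pow_succ', mul_assoc, ← mul_pow, PowerSeries.inv_mul_cancel S hS, one_pow, mul_one]
  rw [subst_pow HasSubst.X'.mul_left, hfS, hS_pow] at h
  exact h.symm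

end LagrangeInversion

end PowerSeries

/-- **Lemma (lem:2).** For a formal power series `f = 1 + ∑_{k≥1} f_k x^k` with complex
coefficients and constant term `1`, and every integer `n ≥ 1`,
`[x^{n−1}] f^n = ∑_{a+b=n, a≥1, b≥0} (1/a)·([x^{a−1}] f^a)·([x^b] f^b)`. -/
theorem coeff_pow_eq_sum_div (f : PowerSeries ℂ)
    (hf : PowerSeries.constantCoeff f = 1) (n : ℕ) (hn : 1 ≤ n) :
    PowerSeries.coeff (n - 1) (f ^ n) =
      ∑ a ∈ Finset.Icc 1 n,
        (a : ℂ)⁻¹ * PowerSeries.coeff (a - 1) (f ^ a) *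
          PowerSeries.coeff (n - a) (f ^ (n - a)) := by
  obtain ⟨S, hS, hfS⟩ := exists_subst_X_mul_eq (hf ▸ one_ne_zero : constantCoeff f ≠ 0)
  obtain ⟨m, rfl⟩ := Nat.exists_eq_add_of_le' hn
  calc coeff (m + 1 - 1) (f ^ (m + 1)) = coeff m (S * (S⁻¹ * d⁄dX ℂ (X * S))) := by
        rw [← mul_assoc, PowerSeries.mul_inv_cancel S hS, one_mul, coeff_derivative,
          coeff_succ_X_mul, Nat.add_sub_cancel, coeff_pow_succ_of_subst_X_mul_eq hS hfS, mul_comm]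
    _ = ∑ k ∈ range (m + 1), coeff k S * coeff (m - k) (S⁻¹ * d⁄dX ℂ (X * S)) := by
        rw [coeff_mul, Nat.sum_antidiagonal_eq_sum_range_succ_mk]
    _ = ∑ a ∈ Icc 1 (m + 1),
          (a : ℂ)⁻¹ * coeff (a - 1) (f ^ a) * coeff (m + 1 - a) (f ^ (m + 1 - a)) := by
        rw [← Ico_add_one_right_eq_Icc, sum_Ico_eq_sum_range, Nat.add_sub_cancel]
        refine sum_congr rfl fun k _ => ?_
        rw [add_comm 1 k, Nat.add_sub_cancel, Nat.add_sub_add_right,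
          coeff_pow_succ_of_subst_X_mul_eq hS hfS, coeff_pow_of_subst_X_mul_eq hS hfS]
        push_cast
        field_simp
end

section
/- Let f = 1 + ∑_{k≥1} f_k x^k be a formal power series with complex coefficients and constant term 1. Then the following identity of formal power series in z holds: exp(∑_{k≥1} (1/k)·([x^k] f^k)·z^k) = ∑_{k≥1} (1/k)·([x^{k−1}] f^k)·z^{k−1}. -/
/-!
Let `W = X·U` solve Lagrange's equation `W = X·f(W)`, so that `U = f(W)`. The residue identity
`[X^s] (X·V)'·V^{-(s+1)} = δ_{s,0}` gives the Lagrange–Bürmann formula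
`[X^N] (X·U)'·U^{-(N+1)}·g(W) = [X^N] g`. Taking `g = f^n` yields both
`[X^m] U = [X^m] f^{m+1} / (m+1)` and `[X^k] U'/U = [X^{k+1}] f^{k+1}`, i.e. `U'/U = G'` for the
exponent `G`. Hence `exp(G)` and `U` solve the same linear equation `y' = G'·y` with `y(0) = 1`.
-/

/-- The formal exponential `exp(G) = ∑_{j≥0} G^j / j!` of a power series `G` with zero
constant term; the `j`-sum is truncated at `j = n` when computing the coefficient of `x^n`,
which is valid since `G` has zero constant term. -/
noncomputable def formalExp (G : PowerSeries ℂ) : PowerSeries ℂ :=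
  PowerSeries.mk fun n =>
    ∑ j ∈ Finset.range (n + 1), PowerSeries.coeff n (G ^ j) / (j.factorial : ℂ)

open Finset

namespace PowerSeries

section CommRing

variable {R : Type*} [CommRing R] {W : R⟦X⟧}

theorem X_pow_dvd_subst_sub_aeval_trunc (hW : constantCoeff W = 0) (g : R⟦X⟧) (n : ℕ) :
    X ^ n ∣ g.subst W - (Polynomial.aeval W (trunc n g) : R⟦X⟧) := by
  have hW' : HasSubst W := HasSubst.of_constantCoeff_zero' hW
  nth_rw 1 [eq_X_pow_mul_shift_add_trunc n g]
  rw [subst_add hW', subst_mul hW', subst_pow hW', subst_X hW', subst_coe hW',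
    add_sub_cancel_right]
  exact (pow_dvd_pow_of_dvd (X_dvd_iff.mpr hW) n).mul_right _

theorem coeff_mul_subst (hW : constantCoeff W = 0) (P g : R⟦X⟧) (N : ℕ) :
    coeff N (P * g.subst W) = ∑ i ∈ range (N + 1), coeff i g * coeff N (P * W ^ i) := by
  have hdvd := (X_pow_dvd_subst_sub_aeval_trunc hW g (N + 1)).mul_left P
  rw [X_pow_dvd_iff] at hdvd
  have htrunc : coeff N (P * g.subst W) = coeff N (P * Polynomial.aeval W (trunc (N + 1) g)) :=
    sub_eq_zero.mp (by simpa only [mul_sub, map_sub] using hdvd N N.lt_succ_self)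
  rw [htrunc, Polynomial.aeval_def, eval₂_trunc_eq_sum_range, mul_sum, map_sum]
  simp only [algebraMap_eq, mul_left_comm P, coeff_C_mul]

theorem coeff_subst_eq_sum (hW : constantCoeff W = 0) (g : R⟦X⟧) (N : ℕ) :
    coeff N (g.subst W) = ∑ i ∈ range (N + 1), coeff i g * coeff N (W ^ i) := by
  simpa only [one_mul] using coeff_mul_subst hW 1 g N

theorem constantCoeff_subst_of_constantCoeff_zero (hW : constantCoeff W = 0) (g : R⟦X⟧) :
    constantCoeff (g.subst W) = constantCoeff g := by
  simpa using coeff_subst_eq_sum hW g 0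

theorem constantCoeff_eq_of_eq_subst_X_mul {f U : R⟦X⟧} (hU : U = f.subst (X * U)) :
    constantCoeff U = constantCoeff f := by
  rw [hU, constantCoeff_subst_of_constantCoeff_zero (by simp)]

theorem eq_of_derivative_eq_mul [IsAddTorsionFree R] {H y₁ y₂ : R⟦X⟧} (h₁ : d⁄dX R y₁ = H * y₁)
    (h₂ : d⁄dX R y₂ = H * y₂) (h₀ : constantCoeff y₁ = constantCoeff y₂) : y₁ = y₂ := by
  ext n
  induction n using Nat.strong_induction_on with
  | _ n ih =>
    rcases n with _ | n
    · simpa using h₀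
    have h : coeff n (d⁄dX R y₁) = coeff n (d⁄dX R y₂) := by
      rw [h₁, h₂, coeff_mul, coeff_mul]
      refine sum_congr rfl fun p hp => ?_
      rw [ih p.2 (by have := mem_antidiagonal.mp hp; omega)]
    rw [coeff_derivative, coeff_derivative, ← Nat.cast_succ, mul_comm, ← nsmul_eq_mul, mul_comm,
      ← nsmul_eq_mul] at h
    exact (smul_right_inj n.succ_ne_zero).mp h

end CommRing

section Field

variable {K : Type*} [Field K]

theorem inv_pow_add_mul_pow {V : K⟦X⟧} (hV : constantCoeff V ≠ 0) (a b : ℕ) :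
    V⁻¹ ^ (a + b) * V ^ b = V⁻¹ ^ a := by
  rw [pow_add, mul_assoc, ← mul_pow, PowerSeries.inv_mul_cancel V hV, one_pow, mul_one]

theorem derivative_X_mul (V : K⟦X⟧) : d⁄dX K (X * V) = V + X * d⁄dX K V := by
  rw [Derivation.leibniz, derivative_X, smul_eq_mul, smul_eq_mul, mul_one, add_comm]

theorem coeff_derivative_X_mul_mul_inv_pow [CharZero K] {V : K⟦X⟧} (hV : constantCoeff V ≠ 0)
    (s : ℕ) : coeff s (d⁄dX K (X * V) * V⁻¹ ^ (s + 1)) = if s = 0 then 1 else 0 := by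
  rcases s with _ | r
  · simp [constantCoeff_inv, hV]
  set Y := V⁻¹ ^ (r + 1)
  set T := d⁄dX K V * V⁻¹ ^ (r + 2)
  have hsplit : d⁄dX K (X * V) * V⁻¹ ^ (r + 2) = Y + X * T := by
    have hVY : V * V⁻¹ ^ (r + 2) = Y := by simpa [mul_comm] using inv_pow_add_mul_pow hV (r + 1) 1
    rw [derivative_X_mul, add_mul, hVY, mul_assoc]
  have hY : d⁄dX K Y = -(C ((r : K) + 1) * T) := by
    simp only [Y, T, derivative_pow, derivative_inv', Nat.add_sub_cancel, map_add, map_natCast,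
      map_one]
    push_cast
    ring
  have hcoeff := coeff_derivative Y r
  rw [hY, map_neg, coeff_C_mul] at hcoeff
  rw [hsplit, map_add, coeff_succ_X_mul, if_neg r.succ_ne_zero]
  refine mul_right_cancel₀ (r.cast_add_one_ne_zero : (r : K) + 1 ≠ 0) ?_
  linear_combination -hcoeff

theorem coeff_derivative_X_mul_mul_inv_pow_mul_subst [CharZero K] {U : K⟦X⟧}
    (hU : constantCoeff U ≠ 0) (g : K⟦X⟧) (N : ℕ) :
    coeff N (d⁄dX K (X * U) * U⁻¹ ^ (N + 1) * g.subst (X * U)) = coeff N g := by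
  have hterm : ∀ j ≤ N, coeff N (d⁄dX K (X * U) * U⁻¹ ^ (N + 1) * (X * U) ^ j) =
      if j = N then 1 else 0 := by
    intro j hj
    obtain ⟨k, rfl⟩ : ∃ k, N = k + j := ⟨N - j, by omega⟩
    rw [show d⁄dX K (X * U) * U⁻¹ ^ (k + j + 1) * (X * U) ^ j =
        X ^ j * (d⁄dX K (X * U) * (U⁻¹ ^ (k + 1 + j) * U ^ j)) by ring,
      inv_pow_add_mul_pow hU, coeff_X_pow_mul, coeff_derivative_X_mul_mul_inv_pow hU]
    simp only [right_eq_add]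
  calc coeff N (d⁄dX K (X * U) * U⁻¹ ^ (N + 1) * g.subst (X * U))
      = ∑ j ∈ range (N + 1), coeff j g * if j = N then 1 else 0 := by
        rw [coeff_mul_subst (by simp)]
        exact sum_congr rfl fun j hj => by rw [hterm j (Nat.lt_succ_iff.mp (mem_range.mp hj))]
    _ = coeff N g := by simp

theorem exists_eq_subst_X_mul {f : K⟦X⟧} (hf : constantCoeff f ≠ 0) :
    ∃ U : K⟦X⟧, U = f.subst (X * U) := by
  set P := X * f⁻¹
  have hP : constantCoeff P = 0 := by simp [P]
  have hP' : IsUnit (coeff 1 P) := by simpa [P, constantCoeff_inv] using hf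
  set W := P.substInvOfIsUnit hP'
  have hW : HasSubst W := HasSubst.substInvOfIsUnit P hP'
  have hXW : X * f.subst W = W := calc
    X * f.subst W = P.subst W * f.subst W := by rw [subst_substInvOfIsUnit_right P hP hP']
    _ = (P * f).subst W := (subst_mul hW _ _).symm
    _ = (X : K⟦X⟧).subst W := by rw [mul_assoc, PowerSeries.inv_mul_cancel f hf, mul_one]
    _ = W := subst_X hW
  exact ⟨f.subst W, by rw [hXW]⟩

section Lagrange

variable [CharZero K] {f U : K⟦X⟧} (hf : constantCoeff f ≠ 0) (hU : U = f.subst (X * U))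
include hf hU

theorem coeff_derivative_X_mul_mul_inv_pow_mul_pow (n N : ℕ) :
    coeff N (d⁄dX K (X * U) * U⁻¹ ^ (N + 1) * U ^ n) = coeff N (f ^ n) := by
  have hU0 : constantCoeff U ≠ 0 := constantCoeff_eq_of_eq_subst_X_mul hU ▸ hf
  rw [← coeff_derivative_X_mul_mul_inv_pow_mul_subst hU0 (f ^ n) N,
    subst_pow (HasSubst.of_constantCoeff_zero' (by simp)), ← hU]

theorem coeff_eq_of_eq_subst_X_mul (m : ℕ) :
    coeff m U = ((m : K) + 1)⁻¹ * coeff m (f ^ (m + 1)) := by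
  have hU0 : constantCoeff U ≠ 0 := constantCoeff_eq_of_eq_subst_X_mul hU ▸ hf
  have h := coeff_derivative_X_mul_mul_inv_pow_mul_pow hf hU (m + 1) m
  rw [mul_assoc, ← mul_pow, PowerSeries.inv_mul_cancel U hU0, one_pow, mul_one, coeff_derivative,
    coeff_succ_X_mul] at h
  rw [← h]
  field_simp

theorem coeff_derivative_mul_inv_of_eq_subst_X_mul (k : ℕ) :
    coeff k (d⁄dX K U * U⁻¹) = coeff (k + 1) (f ^ (k + 1)) := by
  have hU0 : constantCoeff U ≠ 0 := constantCoeff_eq_of_eq_subst_X_mul hU ▸ hf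
  have hsplit : d⁄dX K (X * U) * U⁻¹ = 1 + X * (d⁄dX K U * U⁻¹) := by
    rw [derivative_X_mul, add_mul, PowerSeries.mul_inv_cancel U hU0, mul_assoc]
  rw [← coeff_derivative_X_mul_mul_inv_pow_mul_pow hf hU (k + 1) (k + 1), mul_assoc,
    add_comm (k + 1) 1, inv_pow_add_mul_pow hU0 1, pow_one, hsplit, map_add, coeff_succ_X_mul,
    coeff_one, if_neg k.succ_ne_zero, zero_add]

end Lagrange

end Field

end PowerSeries

open PowerSeries

theorem formalExp_eq_subst_exp {G : ℂ⟦X⟧} (hG : constantCoeff G = 0) :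
    formalExp G = (exp ℂ).subst G := by
  ext n
  rw [formalExp, coeff_mk, coeff_subst_eq_sum hG]
  refine Finset.sum_congr rfl fun j _ => ?_
  simp [coeff_exp, div_eq_inv_mul]

/-- **Proposition (lem:3).** For a formal power series `f = 1 + ∑_{k≥1} f_k x^k` with
complex coefficients and constant term `1`, one has the identity of formal power series
in `z`: `exp(∑_{k≥1} (1/k)·([x^k] f^k)·z^k) = ∑_{k≥1} (1/k)·([x^{k−1}] f^k)·z^{k−1}`. -/
theorem formalExp_sum_coeff_pow (f : PowerSeries ℂ)
    (hf : PowerSeries.constantCoeff f = 1) :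
    formalExp (PowerSeries.mk fun k =>
        if k = 0 then 0 else (k : ℂ)⁻¹ * PowerSeries.coeff k (f ^ k)) =
      PowerSeries.mk fun m => ((m : ℂ) + 1)⁻¹ * PowerSeries.coeff m (f ^ (m + 1)) := by
  have hf0 : constantCoeff f ≠ 0 := by simp [hf]
  obtain ⟨U, hU⟩ := exists_eq_subst_X_mul hf0
  set G : ℂ⟦X⟧ := mk fun k => if k = 0 then 0 else (k : ℂ)⁻¹ * coeff k (f ^ k)
  have hG0 : constantCoeff G = 0 := by simp [G, ← coeff_zero_eq_constantCoeff_apply]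
  have hdG : d⁄dX ℂ G = d⁄dX ℂ U * U⁻¹ := by
    ext k
    rw [coeff_derivative, coeff_derivative_mul_inv_of_eq_subst_X_mul hf0 hU]
    simp only [G, coeff_mk, if_neg k.succ_ne_zero, Nat.cast_succ]
    field_simp
  have hdU : d⁄dX ℂ U = d⁄dX ℂ G * U := by
    rw [hdG, mul_assoc, PowerSeries.inv_mul_cancel U
      (constantCoeff_eq_of_eq_subst_X_mul hU ▸ hf0), mul_one]
  have hdExp : d⁄dX ℂ ((exp ℂ).subst G) = d⁄dX ℂ G * (exp ℂ).subst G := by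
    rw [derivative_subst (HasSubst.of_constantCoeff_zero' hG0), derivative_exp, mul_comm]
  calc formalExp G = (exp ℂ).subst G := formalExp_eq_subst_exp hG0
    _ = U := eq_of_derivative_eq_mul hdExp hdU (by
      rw [constantCoeff_subst_of_constantCoeff_zero hG0, constantCoeff_exp,
        constantCoeff_eq_of_eq_subst_X_mul hU, hf])
    _ = _ := by ext m; rw [coeff_mk, coeff_eq_of_eq_subst_X_mul hf0 hU]
end
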